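/- Let α ≥ −1/2 and α ≥ β > −1, let K ≥ 1 be an integer, and let t_{K,K} ≤ δ < 1. Let G : (δ,1) → [0,∞) be measurable with ∫_δ^1 G(t) ω_{α,β}(t) dt < ∞. Then for every k ∈ {0, 1, …, K}: ∫_δ^1 G(t) P_k^{(α,β)}(t)/P_k^{(α,β)}(1) ω_{α,β}(t) dt ≥ ∫_δ^1 G(t) P_K^{(α,β)}(t)/P_K^{(α,β)}(1) ω_{α,β}(t) dt ≥ 0. -/

import Mathlib

open MeasureTheory Real Filter

/-- Jacobi polynomials defined by the three-term recurrence. -/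
noncomputable def jacobiP (α β : ℝ) : ℕ → ℝ → ℝ
  | 0 => fun _ => 1
  | 1 => fun t => ((α + β + 2) * t + (α - β)) / 2
  | (n + 2) => fun t =>
      let m : ℝ := (n : ℝ) + 1
      let a := (2 * m + α + β) * (2 * m + α + β + 1) * (2 * m + α + β + 2)
      let b := (2 * m + α + β + 1) * (α ^ 2 - β ^ 2)
      let c := (m + α) * (m + β) * (2 * m + α + β + 2)
      let d := 2 * (m + 1) * (m + α + β + 1) * (2 * m + α + β)
      ((a / d) * t + b / d) * jacobiP α β (n + 1) t - (c / d) * jacobiP α β n t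

/-- The incomplete beta function. -/
noncomputable def incBeta (a b x : ℝ) : ℝ :=
  ∫ s in (0:ℝ)..x, s ^ (a - 1) * (1 - s) ^ (b - 1)

/-- The Bessel function of the first kind. -/
noncomputable def besselJ (α x : ℝ) : ℝ :=
  ∑' m : ℕ, ((-1 : ℝ) ^ m / (m.factorial * Real.Gamma (m + α + 1))) * (x / 2) ^ (2 * (m:ℝ) + α)

/-! Every `P_i` with `i ≤ K` is positive on `(t_{K,K}, 1]`: at the largest zero `x` of `P_{n+1}`
the recurrence gives `P_{n+2}(x) = -C P_n(x) < 0`, while `P_{n+2}(1) > 0`, so `P_{n+2}` has a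
largest zero to the right of `x`. On that interval the recurrence with `A, C > 0` makes
`P_n(t) / P_n(1)` decrease in `n`, because the defect
`P_{m+1}(t) P_{m+2}(1) - P_{m+2}(t) P_{m+1}(1)` equals `A (1 - t) P_{m+1}(t) P_{m+1}(1)` plus
`C` times the previous defect. Integrating against `G ω ≥ 0` gives both inequalities. -/

theorem exists_zero_forall_pos_Ioc {f : ℝ → ℝ} {a b : ℝ} (hab : a ≤ b)
    (hf : ContinuousOn f (Set.Icc a b)) (ha : f a < 0) (hb : 0 < f b) :
    ∃ y ∈ Set.Ioo a b, f y = 0 ∧ ∀ t ∈ Set.Ioc y b, 0 < f t := by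
  have hS : IsCompact (Set.Icc a b ∩ f ⁻¹' {0}) :=
    isCompact_Icc.of_isClosed_subset
      (hf.preimage_isClosed_of_isClosed isClosed_Icc isClosed_singleton) Set.inter_subset_left
  obtain ⟨c, hc, hc0⟩ := intermediate_value_Icc hab hf ⟨ha.le, hb.le⟩
  obtain ⟨y, ⟨hyab, hy0⟩, hyS⟩ := hS.exists_isGreatest ⟨c, hc, hc0⟩
  have hya : y ≠ a := by rintro rfl; exact ha.ne hy0
  have hyb : y ≠ b := by rintro rfl; exact hb.ne' hy0
  refine ⟨y, ⟨lt_of_le_of_ne hyab.1 hya.symm, lt_of_le_of_ne hyab.2 hyb⟩, hy0, fun t ht => ?_⟩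
  by_contra! hft
  have hsub : Set.Icc t b ⊆ Set.Icc a b := Set.Icc_subset_Icc_left (hyab.1.trans ht.1.le)
  obtain ⟨w, hw, hw0⟩ := intermediate_value_Icc ht.2 (hf.mono hsub) ⟨hft, hb.le⟩
  exact (ht.1.trans_le hw.1).not_ge (hyS ⟨hsub hw, hw0⟩)

section ThreeTermRecurrence

variable {p : ℕ → ℝ → ℝ} {A B C : ℕ → ℝ}

theorem threeTerm_cross_le
    (hrec : ∀ n t, p (n + 2) t = (A n * t + B n) * p (n + 1) t - C n * p n t)
    (hA : ∀ n, 0 ≤ A n) (hC : ∀ n, 0 ≤ C n) (hp1 : ∀ n, 0 ≤ p n 1)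
    {t : ℝ} (ht : t ≤ 1) (h01 : p 1 t * p 0 1 ≤ p 0 t * p 1 1)
    {N : ℕ} (hpt : ∀ n < N, 0 ≤ p n t) :
    ∀ m, m + 1 ≤ N → p (m + 1) t * p m 1 ≤ p m t * p (m + 1) 1 := by
  intro m
  induction m with
  | zero => exact fun _ => h01
  | succ m ih =>
    intro hm
    have ih := ih (by omega)
    have key : p (m + 1) t * p (m + 2) 1 - p (m + 2) t * p (m + 1) 1 =
        A m * (1 - t) * (p (m + 1) t * p (m + 1) 1) +
          C m * (p m t * p (m + 1) 1 - p (m + 1) t * p m 1) := by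
      rw [hrec, hrec]; ring
    have := mul_nonneg (mul_nonneg (hA m) (sub_nonneg.2 ht))
      (mul_nonneg (hpt (m + 1) (by omega)) (hp1 (m + 1)))
    nlinarith [mul_nonneg (hC m) (sub_nonneg.2 ih)]

theorem threeTerm_ratio_antitoneOn
    (hrec : ∀ n t, p (n + 2) t = (A n * t + B n) * p (n + 1) t - C n * p n t)
    (hA : ∀ n, 0 ≤ A n) (hC : ∀ n, 0 ≤ C n) (hp1 : ∀ n, 0 < p n 1)
    {t : ℝ} (ht : t ≤ 1) (h01 : p 1 t * p 0 1 ≤ p 0 t * p 1 1)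
    {N : ℕ} (hpt : ∀ n < N, 0 ≤ p n t) :
    AntitoneOn (fun n => p n t / p n 1) (Set.Iic N) := by
  refine antitoneOn_of_add_one_le Set.ordConnected_Iic fun m _ _ hm => ?_
  rw [div_le_div_iff₀ (hp1 _) (hp1 _)]
  exact threeTerm_cross_le hrec hA hC (fun n => (hp1 n).le) ht h01 hpt m hm

theorem threeTerm_exists_zero_pos
    (hrec : ∀ n t, p (n + 2) t = (A n * t + B n) * p (n + 1) t - C n * p n t)
    (hC : ∀ n, 0 < C n) (hp1 : ∀ n, 0 < p n 1) (hcont : ∀ n, Continuous (p n))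
    {x₀ : ℝ} (hx₀ : x₀ < 1) (hp0 : ∀ t ∈ Set.Icc x₀ 1, 0 < p 0 t) (h1x₀ : p 1 x₀ = 0)
    (h1pos : ∀ t ∈ Set.Ioc x₀ 1, 0 < p 1 t) (n : ℕ) :
    ∃ x < 1, p (n + 1) x = 0 ∧ (∀ t ∈ Set.Ioc x 1, 0 < p (n + 1) t) ∧
      ∀ i ≤ n, ∀ t ∈ Set.Icc x 1, 0 < p i t := by
  induction n with
  | zero => exact ⟨x₀, hx₀, h1x₀, h1pos, fun i hi => by rwa [Nat.le_zero.1 hi]⟩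
  | succ n ih =>
    obtain ⟨x, hx1, hx0, hxpos, hlow⟩ := ih
    have hneg : p (n + 2) x < 0 := by
      rw [hrec, hx0, mul_zero, zero_sub, neg_neg_iff_pos]
      exact mul_pos (hC n) (hlow n le_rfl x ⟨le_rfl, hx1.le⟩)
    obtain ⟨y, hy, hy0, hypos⟩ :=
      exists_zero_forall_pos_Ioc hx1.le (hcont (n + 2)).continuousOn hneg (hp1 (n + 2))
    refine ⟨y, hy.2, hy0, hypos, fun i hi t ht => ?_⟩
    rcases hi.lt_or_eq with hi | rfl
    · exact hlow i (by omega) t ⟨hy.1.le.trans ht.1, ht.2⟩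
    · exact hxpos t ⟨hy.1.trans_le ht.1, ht.2⟩

end ThreeTermRecurrence

section Jacobi

variable {α β : ℝ}

noncomputable def jacobiA (α β : ℝ) (n : ℕ) : ℝ :=
  (2 * n + α + β) * (2 * n + α + β + 1) * (2 * n + α + β + 2) /
    (2 * (n + 1) * (n + α + β + 1) * (2 * n + α + β))

noncomputable def jacobiB (α β : ℝ) (n : ℕ) : ℝ :=
  (2 * n + α + β + 1) * (α ^ 2 - β ^ 2) / (2 * (n + 1) * (n + α + β + 1) * (2 * n + α + β))

noncomputable def jacobiC (α β : ℝ) (n : ℕ) : ℝ :=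
  (n + α) * (n + β) * (2 * n + α + β + 2) / (2 * (n + 1) * (n + α + β + 1) * (2 * n + α + β))

theorem jacobiP_add_two (α β : ℝ) (n : ℕ) (t : ℝ) :
    jacobiP α β (n + 2) t = (jacobiA α β (n + 1) * t + jacobiB α β (n + 1)) *
      jacobiP α β (n + 1) t - jacobiC α β (n + 1) * jacobiP α β n t := by
  simp only [jacobiP, jacobiA, jacobiB, jacobiC, Nat.cast_add, Nat.cast_one]

theorem continuous_jacobiP (α β : ℝ) : ∀ n, Continuous (jacobiP α β n)
  | 0 => continuous_const
  | 1 => by unfold jacobiP; fun_prop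
  | n + 2 => by
    have := continuous_jacobiP α β n
    have := continuous_jacobiP α β (n + 1)
    simp only [funext (jacobiP_add_two α β n)]
    fun_prop

theorem jacobiA_pos (hα : -1 < α) (hβ : -1 < β) (n : ℕ) : 0 < jacobiA α β (n + 1) := by
  have : (0 : ℝ) ≤ n := n.cast_nonneg
  unfold jacobiA; push_cast
  apply div_pos <;> apply_rules [mul_pos] <;> linarith

theorem jacobiC_pos (hα : -1 < α) (hβ : -1 < β) (n : ℕ) : 0 < jacobiC α β (n + 1) := by
  have : (0 : ℝ) ≤ n := n.cast_nonneg
  unfold jacobiC; push_cast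
  apply div_pos <;> apply_rules [mul_pos] <;> linarith

theorem jacobiA_add_jacobiB (hα : -1 < α) (hβ : -1 < β) (n : ℕ) :
    (jacobiA α β (n + 1) + jacobiB α β (n + 1)) * (n + 1 + α) * (n + 2) =
      (n + 2 + α) * (n + 1 + α) + 2 * jacobiC α β (n + 1) * (n + 1) * (n + 2) := by
  have : (0 : ℝ) ≤ n := n.cast_nonneg
  have h1 : (2 * (n + 1) + α + β : ℝ) ≠ 0 := by linarith
  have h2 : ((n : ℝ) + 1 + α + β + 1) ≠ 0 := by linarith
  have h3 : ((n : ℝ) + 1 + 1) ≠ 0 := by linarith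
  unfold jacobiA jacobiB jacobiC; push_cast
  field_simp
  ring

/- With the classical recurrence, which subtracts `2 C P_n`, the identity above gives
`P_n(1) = Γ(n+α+1)/(n! Γ(α+1))` exactly; `jacobiP` subtracts only `C P_n`, so only this
inequality survives. -/
theorem jacobiP_one_pos_and_le (hα : -1 < α) (hβ : -1 < β) (n : ℕ) :
    0 < jacobiP α β n 1 ∧ (n + 1 + α) * jacobiP α β n 1 ≤ (n + 1) * jacobiP α β (n + 1) 1 := by
  induction n with
  | zero =>
    simp only [jacobiP]
    constructor <;> linarith
  | succ n ih =>
    obtain ⟨hpos, hle⟩ := ih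
    have : (0 : ℝ) ≤ n := n.cast_nonneg
    have hpos' : 0 < jacobiP α β (n + 1) 1 := by nlinarith
    refine ⟨hpos', ?_⟩
    have hid := jacobiA_add_jacobiB hα hβ n
    have hC := jacobiC_pos hα hβ n
    have key : ((n : ℝ) + 1 + α) * ((n + 2 + α) * jacobiP α β (n + 1) 1) ≤
        (n + 1 + α) * ((n + 2) * jacobiP α β (n + 2) 1) := by
      have expand : ((n : ℝ) + 1 + α) * ((n + 2) * jacobiP α β (n + 2) 1) =
          (jacobiA α β (n + 1) + jacobiB α β (n + 1)) * (n + 1 + α) * (n + 2) *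
              jacobiP α β (n + 1) 1 -
            jacobiC α β (n + 1) * (n + 2) * ((n + 1 + α) * jacobiP α β n 1) := by
        rw [jacobiP_add_two]; ring
      rw [expand, hid]
      nlinarith [mul_le_mul_of_nonneg_left hle (by positivity : 0 ≤ jacobiC α β (n + 1) * (n + 2)),
        mul_pos (mul_pos hC hpos') (by positivity : (0 : ℝ) < (n + 1) * (n + 2))]
    have := le_of_mul_le_mul_left key (by linarith)
    push_cast
    linarith

theorem jacobiP_one_pos (hα : -1 < α) (hβ : -1 < β) (n : ℕ) : 0 < jacobiP α β n 1 :=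
  (jacobiP_one_pos_and_le hα hβ n).1

theorem jacobiP_pos_of_isLargestZero (hα : -1 < α) (hβ : -1 < β) {K : ℕ} {z : ℝ}
    (hzero : jacobiP α β K z = 0) (hmax : ∀ t, jacobiP α β K t = 0 → t ≤ z)
    {i : ℕ} (hi : i ≤ K) {t : ℝ} (ht : t ∈ Set.Ioc z 1) : 0 < jacobiP α β i t := by
  obtain _ | n := K
  · exact absurd hzero one_ne_zero
  have hs : 0 < α + β + 2 := by linarith
  obtain ⟨x, -, hx0, hxpos, hlow⟩ :=
    threeTerm_exists_zero_pos (jacobiP_add_two α β) (jacobiC_pos hα hβ) (jacobiP_one_pos hα hβ)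
      (continuous_jacobiP α β) (x₀ := (β - α) / (α + β + 2))
      (by rw [div_lt_one hs]; linarith) (fun _ _ => one_pos)
      (by simp only [jacobiP]; field_simp; ring)
      (fun t ht => by
        simp only [jacobiP]
        have := (div_lt_iff₀ hs).1 ht.1
        linarith) n
  have hxt : x < t := (hmax x hx0).trans_lt ht.1
  rcases hi.lt_or_eq with hi | rfl
  · exact hlow i (by omega) t ⟨hxt.le, ht.2⟩
  · exact hxpos t ⟨hxt, ht.2⟩

theorem jacobiP_ratio_antitoneOn (hα : -1 < α) (hβ : -1 < β) {K : ℕ} {t : ℝ} (ht : t ≤ 1)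
    (hpos : ∀ n < K, 0 ≤ jacobiP α β n t) :
    AntitoneOn (fun n => jacobiP α β n t / jacobiP α β n 1) (Set.Iic K) := by
  refine threeTerm_ratio_antitoneOn (jacobiP_add_two α β) (fun n => (jacobiA_pos hα hβ n).le)
    (fun n => (jacobiC_pos hα hβ n).le) (jacobiP_one_pos hα hβ) ht ?_ hpos
  simp only [jacobiP]
  nlinarith

theorem neg_one_lt_of_jacobiP_one_pos (hα : -1 < α) (hβ : -1 < β) {t : ℝ}
    (ht : 0 < jacobiP α β 1 t) : -1 < t := by
  simp only [jacobiP] at ht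
  nlinarith

end Jacobi

theorem jacobi_weighted_ordering_general (α β : ℝ) (hα : -1/2 ≤ α) (hβ : -1 < β)
    (K : ℕ) (hK : 1 ≤ K) (tKK : ℝ)
    (hzero : jacobiP α β K tKK = 0)
    (hmax : ∀ t : ℝ, jacobiP α β K t = 0 → t ≤ tKK)
    (δ : ℝ) (hδ : tKK ≤ δ) (hδ1 : δ < 1)
    (G : ℝ → ℝ)
    (hGnonneg : ∀ t ∈ Set.Ioo δ 1, 0 ≤ G t)
    (hGint : IntervalIntegrable (fun t => G t * ((1 - t) ^ α * (1 + t) ^ β)) volume δ 1)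
    (k : ℕ) (hk : k ≤ K) :
    (∫ t in δ..1, G t * (jacobiP α β k t / jacobiP α β k 1) *
        ((1 - t) ^ α * (1 + t) ^ β)) ≥
      (∫ t in δ..1, G t * (jacobiP α β K t / jacobiP α β K 1) *
        ((1 - t) ^ α * (1 + t) ^ β)) ∧
    (∫ t in δ..1, G t * (jacobiP α β K t / jacobiP α β K 1) *
        ((1 - t) ^ α * (1 + t) ^ β)) ≥ 0 := by
  have hα' : -1 < α := by linarith
  have hpos : ∀ i ≤ K, ∀ t ∈ Set.Ioo δ 1, 0 < jacobiP α β i t := fun i hi t ht =>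
    jacobiP_pos_of_isLargestZero hα' hβ hzero hmax hi ⟨hδ.trans_lt ht.1, ht.2.le⟩
  have hratio : ∀ t ∈ Set.Ioo δ 1,
      jacobiP α β K t / jacobiP α β K 1 ≤ jacobiP α β k t / jacobiP α β k 1 := fun t ht =>
    jacobiP_ratio_antitoneOn hα' hβ ht.2.le (fun n hn => (hpos n hn.le t ht).le)
      (Set.mem_Iic.2 hk) (Set.mem_Iic.2 le_rfl) hk
  have hweight : ∀ t ∈ Set.Ioo δ 1, 0 ≤ (1 - t) ^ α * (1 + t) ^ β := fun t ht =>
    have := neg_one_lt_of_jacobiP_one_pos hα' hβ (hpos 1 hK t ht)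
    mul_nonneg (rpow_nonneg (by linarith [ht.2]) α) (rpow_nonneg (by linarith) β)
  have hint : ∀ j, IntervalIntegrable (fun t => G t * (jacobiP α β j t / jacobiP α β j 1) *
      ((1 - t) ^ α * (1 + t) ^ β)) volume δ 1 := fun j => by
    simpa only [mul_right_comm] using
      hGint.mul_continuousOn ((continuous_jacobiP α β j).div_const _).continuousOn
  constructor
  · refine intervalIntegral.integral_mono_on_of_le_Ioo hδ1.le (hint K) (hint k) fun t ht => ?_
    exact mul_le_mul_of_nonneg_right
      (mul_le_mul_of_nonneg_left (hratio t ht) (hGnonneg t ht)) (hweight t ht)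
  · simpa using intervalIntegral.integral_mono_on_of_le_Ioo hδ1.le intervalIntegrable_const
      (hint K) fun t ht => mul_nonneg (mul_nonneg (hGnonneg t ht)
        (div_nonneg (hpos K le_rfl t ht).le (jacobiP_one_pos hα' hβ K).le)) (hweight t ht)

/-- Key inequality in the proof of Theorem 4.2: for nonnegative `G` on `(δ,1)` with
`∫_δ^1 G ω_{α,β} < ∞` and `t_{K,K} ≤ δ < 1`, for all `0 ≤ k ≤ K`,
`∫_δ^1 G P_k/P_k(1) ω ≥ ∫_δ^1 G P_K/P_K(1) ω ≥ 0`. -/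
theorem jacobi_weighted_ordering (α β : ℝ) (hα : -1/2 ≤ α) (hβα : β ≤ α) (hβ : -1 < β)
    (K : ℕ) (hK : 1 ≤ K) (tKK : ℝ)
    (hzero : jacobiP α β K tKK = 0)
    (hmax : ∀ t : ℝ, jacobiP α β K t = 0 → t ≤ tKK)
    (δ : ℝ) (hδ : tKK ≤ δ) (hδ1 : δ < 1)
    (G : ℝ → ℝ) (hGmeas : Measurable G)
    (hGnonneg : ∀ t ∈ Set.Ioo δ 1, 0 ≤ G t)
    (hGint : IntervalIntegrable (fun t => G t * ((1 - t) ^ α * (1 + t) ^ β)) volume δ 1)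
    (k : ℕ) (hk : k ≤ K) :
    (∫ t in δ..1, G t * (jacobiP α β k t / jacobiP α β k 1) *
        ((1 - t) ^ α * (1 + t) ^ β)) ≥
      (∫ t in δ..1, G t * (jacobiP α β K t / jacobiP α β K 1) *
        ((1 - t) ^ α * (1 + t) ^ β)) ∧
    (∫ t in δ..1, G t * (jacobiP α β K t / jacobiP α β K 1) *
        ((1 - t) ^ α * (1 + t) ^ β)) ≥ 0 :=
  jacobi_weighted_ordering_general α β hα hβ K hK tKK hzero hmax δ hδ hδ1 G hGnonneg hGint k hk
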